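/- arXiv:1309.6070 — 7 statements merged into one kernel-verified Lean document; each statement's English description precedes it below -/
import Mathlib

section
/- For every oriented word u of rank k ≥ 2 and every element g of the free group F_k, τ_u(g) + τ_u(g^{-1}) = 0. -/
open FreeGroup

/-- A letter over the alphabet `{a_1,...,a_k, a_1⁻¹,...,a_k⁻¹}`:
`(i, true)` is the positive letter `a_i`, `(i, false)` is `a_i⁻¹`. -/
abbrev Letter (k : ℕ) := Fin k × Bool

/-- Formal inverse of a letter. -/
def invL {k : ℕ} (x : Letter k) : Letter k := (x.1, !x.2)

/-- An oriented word of rank `k`: each of the `2k` letters appears exactly once. -/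
def IsOriented {k : ℕ} (u : List (Letter k)) : Prop :=
  u.Nodup ∧ ∀ x : Letter k, x ∈ u

/-- `x` occurs to the left of `y` in `u`. -/
def leftOf {k : ℕ} (u : List (Letter k)) (x y : Letter k) : Prop :=
  u.idxOf x < u.idxOf y

instance {k : ℕ} (u : List (Letter k)) (x y : Letter k) : Decidable (leftOf u x y) :=
  inferInstanceAs (Decidable (_ < _))

/-- Number of occurrences of the two-letter word `xy` as a contiguous subword of `L`. -/
def cnt {k : ℕ} (L : List (Letter k)) (x y : Letter k) : ℕ :=
  (L.zip L.tail).count (x, y)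

/-- The case transition weight `α_u`, on a reduced word `L`. -/
noncomputable def alphaW {k : ℕ} (u L : List (Letter k)) : ℝ :=
  (∑ a : Fin k, ∑ b : Fin k,
      if leftOf u (a, false) (b, false) then (cnt L (a, true) (b, false) : ℝ) else 0)
  - ∑ a : Fin k, ∑ b : Fin k,
      if leftOf u (a, true) (b, true) then (cnt L (b, false) (a, true) : ℝ) else 0

/-- The letter transition weight `β_u`, on a reduced word `L`. -/
noncomputable def betaW {k : ℕ} (u L : List (Letter k)) : ℝ :=
  (∑ a : Fin k, ∑ b : Fin k,
      if leftOf u (a, false) (b, true) then (cnt L (a, true) (b, true) : ℝ) else 0)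
  - ∑ a : Fin k, ∑ b : Fin k,
      if leftOf u (a, false) (b, true) then (cnt L (b, false) (a, false) : ℝ) else 0

/-- The last letter weight `ω`, on a reduced word `L`. -/
noncomputable def omegaW {k : ℕ} (L : List (Letter k)) : ℝ :=
  match L.getLast? with
  | none => 0
  | some x => if x.2 then 1 / 2 else -(1 / 2)

/-- The weight `τ_u` induced by an oriented word `u`, evaluated on the reduced form. -/
noncomputable def tau {k : ℕ} (u : List (Letter k)) (g : FreeGroup (Fin k)) : ℝ :=
  alphaW u g.toWord + betaW u g.toWord + omegaW g.toWord

/-- The weight contribution `wtc_u` of a reduced two-letter word `xy`. -/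
noncomputable def wtc {k : ℕ} (u : List (Letter k)) (x y : Letter k) : ℝ :=
  if x.2 then (if leftOf u (x.1, false) y then 1 else 0)
  else (if leftOf u y (x.1, true) then -1 else 0)

/-- The inverse word of `u`. -/
def invWord {k : ℕ} (u : List (Letter k)) : List (Letter k) := (u.map invL).reverse

/-- A function `τ : G → ℝ` with small relative defect. -/
def SmallRelDefect {G : Type*} [Group G] (τ : G → ℝ) : Prop :=
  τ 1 = 0 ∧ ∀ g h : G, (g ≠ 1 ∨ h ≠ 1) → |τ g + τ h - τ (g * h)| < |τ g| + |τ h|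

/-!
Let `L` be the reduced word of `g`; then `g⁻¹` has reduced word `invRev L`, whose two-letter
subwords are the words `y⁻¹ x⁻¹` for the subwords `x y` of `L`. This turns each `β`-count of `g⁻¹`
into the opposite `β`-count of `g`. Since `u` orders any two distinct letters of the same sign, the
`α`-sums of `g` and `g⁻¹` combine into the number of sign changes `+ → -` in `L` minus the number of
sign changes `- → +` (a reduced word has no subword `a a⁻¹` or `a⁻¹ a`). That difference telescopes
to `[first letter positive] - [last letter positive]`, which cancels `ω(g) + ω(g⁻¹)`.
-/

theorem Finset.sum_sum_ite_add_sum_sum_ite_swap {ι M : Type*} [Fintype ι] [AddCommMonoid M]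
    (r : ι → ι → Prop) [DecidableRel r] (htri : ∀ a b, r a b ∨ a = b ∨ r b a)
    (hasymm : ∀ a b, r a b → ¬r b a) (f : ι → ι → M) (hf : ∀ a, f a a = 0) :
    ((∑ a, ∑ b, if r a b then f a b else 0) + ∑ a, ∑ b, if r b a then f a b else 0) =
      ∑ a, ∑ b, f a b := by
  simp only [← Finset.sum_add_distrib]
  refine Finset.sum_congr rfl fun a _ => Finset.sum_congr rfl fun b _ => ?_
  rcases htri a b with h | rfl | h
  · simp [h, hasymm a b h]
  · simp [hf]
  · simp [h, hasymm b a h]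

namespace List

variable {α β : Type*}

theorem consecutivePairs_cons (x : α) (l : List α) :
    (x :: l).consecutivePairs = (l.head?.map (x, ·)).toList ++ l.consecutivePairs := by
  cases l <;> rfl

theorem consecutivePairs_append_singleton (l : List α) (x : α) :
    (l ++ [x]).consecutivePairs = l.consecutivePairs ++ (l.getLast?.map (·, x)).toList := by
  induction l with
  | nil => rfl
  | cons y l ih =>
    rw [cons_append, consecutivePairs_cons, ih, consecutivePairs_cons]
    cases l <;> simp

theorem consecutivePairs_map (f : α → β) (l : List α) :
    (l.map f).consecutivePairs = l.consecutivePairs.map (Prod.map f f) := by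
  rw [consecutivePairs, consecutivePairs, ← map_tail, zip_map]

theorem consecutivePairs_reverse (l : List α) :
    l.reverse.consecutivePairs = (l.consecutivePairs.map Prod.swap).reverse := by
  induction l with
  | nil => rfl
  | cons x l ih =>
    rw [reverse_cons, consecutivePairs_append_singleton, ih, consecutivePairs_cons]
    cases l <;> simp

theorem IsChain.rel_of_mem_consecutivePairs {R : α → α → Prop} {l : List α} (h : l.IsChain R) :
    ∀ p ∈ l.consecutivePairs, R p.1 p.2 := by
  induction h with
  | nil | singleton => simp [consecutivePairs]
  | cons_cons hr _ ih => simpa [consecutivePairs_cons, hr] using ih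

-- Stated additively to avoid truncated subtraction in `ℕ`.
theorem count_consecutivePairs_true_false_add (l : List Bool) :
    l.consecutivePairs.count (true, false) + (l.getLast?.getD false).toNat =
      l.consecutivePairs.count (false, true) + (l.head?.getD false).toNat := by
  induction l with
  | nil => rfl
  | cons x l ih =>
    cases l with
    | nil => rfl
    | cons y l =>
      simp only [consecutivePairs_cons, head?_cons, Option.map_some, Option.toList_some,
        singleton_append, count_cons, getLast?_cons_cons, Option.getD_some] at ih ⊢
      cases x <;> cases y <;> simp at ih ⊢ <;> omega

theorem sum_sum_count_consecutivePairs {ι : Type*} [Fintype ι] [DecidableEq ι] [DecidableEq β]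
    (L : List (ι × β)) (s t : β) :
    ∑ a, ∑ b, L.consecutivePairs.count ((a, s), (b, t)) =
      (L.map Prod.snd).consecutivePairs.count (s, t) := by
  rw [consecutivePairs_map]
  induction L.consecutivePairs with
  | nil => simp
  | cons p P ih =>
    obtain ⟨⟨i, s'⟩, ⟨j, t'⟩⟩ := p
    simp only [count_cons, Finset.sum_add_distrib, ih, map_cons]
    congr 1
    by_cases hs : s' = s <;> by_cases ht : t' = t <;> simp [hs, ht, Prod.ext_iff, ite_and]

end List

section Weights

variable {k : ℕ}

theorem invL_involutive : Function.Involutive (invL (k := k)) := fun x => by simp [invL]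

theorem cnt_eq_count (L : List (Letter k)) (x y : Letter k) :
    cnt L x y = L.consecutivePairs.count (x, y) := rfl

theorem cnt_invRev (L : List (Letter k)) (x y : Letter k) :
    cnt (invRev L) x y = cnt L (invL y) (invL x) := by
  have hinj : Function.Injective (Prod.swap ∘ Prod.map (invL (k := k)) (invL (k := k))) :=
    Prod.swap_injective.comp (invL_involutive.injective.prodMap invL_involutive.injective)
  have hxy : (x, y) = (Prod.swap ∘ Prod.map invL invL) (invL y, invL x) := by
    simp [invL_involutive _]
  rw [cnt_eq_count, cnt_eq_count, invRev, List.consecutivePairs_reverse,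
    List.consecutivePairs_map, List.count_reverse, List.map_map, hxy]
  exact List.count_map_of_injective _ _ hinj _

theorem cnt_invL_eq_zero {L : List (Letter k)} (hL : IsReduced L) (x : Letter k) :
    cnt L x (invL x) = 0 := by
  rw [cnt_eq_count, List.count_eq_zero]
  intro h
  simpa [invL] using List.IsChain.rel_of_mem_consecutivePairs hL _ h

theorem alphaW_add_alphaW_invRev {u L : List (Letter k)} (hu : ∀ x, x ∈ u) (hL : IsReduced L) :
    alphaW u L + alphaW u (invRev L) =
      ((L.map Prod.snd).consecutivePairs.count (true, false) : ℝ) -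
        (L.map Prod.snd).consecutivePairs.count (false, true) := by
  have htri (s : Bool) (a b : Fin k) :
      leftOf u (a, s) (b, s) ∨ a = b ∨ leftOf u (b, s) (a, s) := by
    rcases lt_trichotomy (u.idxOf (a, s)) (u.idxOf (b, s)) with h | h | h
    · exact .inl h
    · exact .inr (.inl (by simpa using (List.idxOf_inj (hu _)).1 h))
    · exact .inr (.inr h)
  have hasymm (s : Bool) (a b : Fin k) : leftOf u (a, s) (b, s) → ¬leftOf u (b, s) (a, s) :=
    lt_asymm
  have hpos := Finset.sum_sum_ite_add_sum_sum_ite_swap _ (htri false) (hasymm false)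
    (fun a b => (cnt L (a, true) (b, false) : ℝ))
    (fun a => by simpa [invL] using cnt_invL_eq_zero hL (a, true))
  have hneg := Finset.sum_sum_ite_add_sum_sum_ite_swap _ (htri true) (hasymm true)
    (fun a b => (cnt L (a, false) (b, true) : ℝ))
    (fun a => by simpa [invL] using cnt_invL_eq_zero hL (a, false))
  nth_rewrite 2 [Finset.sum_comm] at hpos hneg
  unfold alphaW
  simp only [cnt_invRev, invL, Bool.not_true, Bool.not_false]
  simp only [cnt_eq_count] at hpos hneg ⊢
  simp only [← List.sum_sum_count_consecutivePairs, Nat.cast_sum]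
  linarith

theorem betaW_invRev (u L : List (Letter k)) : betaW u (invRev L) = -betaW u L := by
  unfold betaW
  simp only [cnt_invRev, invL, Bool.not_true, Bool.not_false]
  ring

theorem omegaW_add_omegaW_invRev (L : List (Letter k)) :
    omegaW L + omegaW (invRev L) =
      ((L.map Prod.snd).getLast?.getD false).toNat - ((L.map Prod.snd).head?.getD false).toNat := by
  cases L with
  | nil => simp [omegaW]
  | cons x t =>
    simp only [omegaW, invRev, List.getLast?_reverse, List.head?_map, List.head?_cons,
      List.getLast?_map, List.getLast?_cons, Option.map_some, Option.getD_some]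
    cases x.2 <;> cases (t.getLast?.getD x).2 <;> norm_num [invL]

end Weights

theorem stmt1_general {k : ℕ} (u : List (Letter k)) (hu : IsOriented u)
    (g : FreeGroup (Fin k)) :
    tau u g + tau u g⁻¹ = 0 := by
  have hL : IsReduced g.toWord := isReduced_toWord
  have hα := alphaW_add_alphaW_invRev hu.2 hL
  have hβ := betaW_invRev u g.toWord
  have hω := omegaW_add_omegaW_invRev g.toWord
  have hsign := congrArg (Nat.cast : ℕ → ℝ)
    (List.count_consecutivePairs_true_false_add (g.toWord.map Prod.snd))
  rw [tau, tau, toWord_inv]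
  push_cast at hsign
  linarith

theorem stmt1 {k : ℕ} (hk : 2 ≤ k) (u : List (Letter k)) (hu : IsOriented u)
    (g : FreeGroup (Fin k)) :
    tau u g + tau u g⁻¹ = 0 :=
  stmt1_general u hu g
end

section
/- Let u be an oriented word of rank k ≥ 2. For every reduced group word g = x_1 x_2 ... x_n of rank k, τ_u(g) = Σ_{i=1}^{n−1} wtc_u(x_i x_{i+1}) + ω(g), where wtc_u is the weight contribution function. -/
open FreeGroup

/-!
Counting the two-letter subwords `xy` of `g` by their letters turns the right-hand side into
`∑ x y, #_{xy}(g) · wtc_u(xy)`. Split by the signs of `x` and `y`: the patterns `(+,−)` and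
`(−,+)` give the two sums of `α_u`, and `(+,+)` and `(−,−)` give those of `β_u`.
-/

lemma List.sum_map_eq_sum_count_nsmul {α M : Type*} [Fintype α] [DecidableEq α]
    [AddCommMonoid M] (l : List α) (f : α → M) :
    (l.map f).sum = ∑ a, l.count a • f a := by
  rw [Finset.sum_list_map_count]
  refine Finset.sum_subset (Finset.subset_univ _) fun a _ ha => ?_
  rw [List.count_eq_zero_of_not_mem (by simpa using ha), zero_smul]

lemma sum_map_wtc_eq_sum_cnt_mul {k : ℕ} (u L : List (Letter k)) :
    ((L.zip L.tail).map fun p => wtc u p.1 p.2).sum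
      = ∑ x : Letter k, ∑ y : Letter k, (cnt L x y : ℝ) * wtc u x y := by
  rw [List.sum_map_eq_sum_count_nsmul, ← Fintype.sum_prod_type']
  simp only [cnt, nsmul_eq_mul]
  -- `cnt` counts with the product `BEq` instance, which agrees with the decidable one.
  congr!

lemma wtc_true {k : ℕ} (u : List (Letter k)) (a : Fin k) (y : Letter k) :
    wtc u (a, true) y = if leftOf u (a, false) y then 1 else 0 := rfl

lemma wtc_false {k : ℕ} (u : List (Letter k)) (a : Fin k) (y : Letter k) :
    wtc u (a, false) y = -if leftOf u y (a, true) then 1 else 0 := by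
  rw [wtc, if_neg Bool.false_ne_true, neg_ite, neg_zero]

lemma alphaW_add_betaW_eq_sum_cnt_mul {k : ℕ} (u L : List (Letter k)) :
    alphaW u L + betaW u L
      = ∑ x : Letter k, ∑ y : Letter k, (cnt L x y : ℝ) * wtc u x y := by
  have hsplit : (∑ x : Letter k, ∑ y : Letter k, (cnt L x y : ℝ) * wtc u x y)
      = ∑ a : Fin k, ∑ b : Fin k, ∑ s : Bool, ∑ t : Bool,
        (cnt L (a, s) (b, t) : ℝ) * wtc u (a, s) (b, t) := by
    simp only [Fintype.sum_prod_type]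
    exact Finset.sum_congr rfl fun a _ => Finset.sum_comm
  rw [hsplit, alphaW, betaW, Finset.sum_comm (γ := Fin k) (f := fun a b =>
      if leftOf u (a, true) (b, true) then (cnt L (b, false) (a, true) : ℝ) else 0),
    Finset.sum_comm (γ := Fin k) (f := fun a b =>
      if leftOf u (a, false) (b, true) then (cnt L (b, false) (a, false) : ℝ) else 0)]
  simp only [Fintype.sum_bool, wtc_true, wtc_false, mul_ite, mul_neg, mul_one, mul_zero,
    Finset.sum_add_distrib, Finset.sum_neg_distrib]
  ring

theorem stmt2_general {k : ℕ} (u : List (Letter k))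
    (g : FreeGroup (Fin k)) :
    tau u g
      = ((g.toWord.zip g.toWord.tail).map fun p => wtc u p.1 p.2).sum + omegaW g.toWord := by
  rw [tau, alphaW_add_betaW_eq_sum_cnt_mul, sum_map_wtc_eq_sum_cnt_mul]

theorem stmt2 {k : ℕ} (hk : 2 ≤ k) (u : List (Letter k)) (hu : IsOriented u)
    (g : FreeGroup (Fin k)) :
    tau u g
      = ((g.toWord.zip g.toWord.tail).map fun p => wtc u p.1 p.2).sum + omegaW g.toWord :=
  stmt2_general u g
end

section
/- For every oriented word u of rank k ≥ 2, the weight function τ_u : F_k → ℝ is a quasi-character of defect exactly 1/2. Moreover, |τ_u(g) + τ_u(h) − τ_u(gh)| equals 0 if g = e or h = e or gh = e, and equals 1/2 if g ≠ e, h ≠ e, and gh ≠ e. -/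
open FreeGroup

/-!
On a reduced word, `τ_u` is the sum of the pair weights `wtc u x y` over adjacent letters plus the
last-letter term `ω`. For an oriented `u` and a reduced pair `x y` one has
`wtc x y = [x⁻¹ <_u y] - [x negative]`, so `wtc x y + wtc y⁻¹ x⁻¹ = ω x - ω y`: along a reduced
word the weights of a word and of its inverse telescope, and `τ_u (g⁻¹) = -τ_u g`.
Writing `g = P C`, `h = C⁻¹ Q` and `g h = P Q` with all three reduced, everything except the letters
`p, c, q` at the junctions cancels, and the defect becomes
`|[p⁻¹ <_u c] + [c <_u q] - [p⁻¹ <_u q] - 1/2|` (or `|ω - wtc|` of a single pair when `P`, `C` or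
`Q` is empty), which is `1/2` because the bracket sum of three distinct letters is `0` or `1`.
-/

theorem FreeGroup.exists_reduce_append_eq {α : Type*} [DecidableEq α] {L₁ L₂ : List (α × Bool)}
    (h₁ : IsReduced L₁) (h₂ : IsReduced L₂) :
    ∃ P C Q, L₁ = P ++ C ∧ L₂ = invRev C ++ Q ∧ reduce (L₁ ++ L₂) = P ++ Q := by
  induction L₁ using List.reverseRecOn generalizing L₂ with
  | nil => exact ⟨[], [], L₂, rfl, rfl, h₂.reduce_eq⟩
  | append_singleton L x ih =>
    rcases L₂ with _ | ⟨y, L₂⟩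
    · exact ⟨L ++ [x], [], [], by simp, rfl, by simpa using h₁.reduce_eq⟩
    by_cases hy : y = (x.1, !x.2)
    · obtain ⟨P, C, Q, rfl, rfl, hPQ⟩ := ih (h₁.infix (List.prefix_append _ _).isInfix)
        (h₂.infix (List.suffix_cons _ _).isInfix)
      refine ⟨P, C ++ [x], Q, by simp, by simp [hy, invRev], ?_⟩
      rw [← hPQ, hy, List.append_assoc, List.singleton_append]
      exact reduce.Step.eq Red.Step.not
    · refine ⟨L ++ [x], [], y :: L₂, by simp, rfl, IsReduced.reduce_eq ?_⟩
      refine h₁.append_overlap (L₂ := [x]) (isReduced_cons_cons.2 ⟨?_, h₂⟩) (by simp)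
      intro h
      by_contra hne
      exact hy (Prod.ext h.symm (Bool.eq_not_iff.2 (Ne.symm hne)))

theorem FreeGroup.exists_toWord_mul_eq {α : Type*} [DecidableEq α] (x y : FreeGroup α) :
    ∃ P C Q, x.toWord = P ++ C ∧ y.toWord = invRev C ++ Q ∧ (x * y).toWord = P ++ Q := by
  rw [toWord_mul]
  exact exists_reduce_append_eq isReduced_toWord isReduced_toWord

section Weight

variable {k : ℕ} {u : List (Letter k)}

lemma sum_sum_ite_count (Z : List (Letter k × Letter k)) (s t : Bool)
    (c : Fin k → Fin k → Prop) [∀ a b, Decidable (c a b)] :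
    ∑ a : Fin k, ∑ b : Fin k, (if c a b then (Z.count ((a, s), (b, t)) : ℝ) else 0) =
      (Z.map fun z => if z.1.2 = s ∧ z.2.2 = t ∧ c z.1.1 z.2.1 then (1 : ℝ) else 0).sum := by
  induction Z with
  | nil => simp
  | cons w Z ih =>
    obtain ⟨⟨a, s'⟩, ⟨b, t'⟩⟩ := w
    simp only [List.count_cons, List.map_cons, List.sum_cons, ← ih, Nat.cast_add,
      ite_add_zero, Finset.sum_add_distrib]
    rw [add_comm]
    congr 1
    rw [Fintype.sum_eq_single a fun x hx => Fintype.sum_eq_zero _ fun y => by simp [Ne.symm hx],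
      Fintype.sum_eq_single b fun y hy => by simp [Ne.symm hy]]
    by_cases c a b <;> simp [*, and_comm]

noncomputable def wtcSum (u L : List (Letter k)) : ℝ :=
  ((L.zip L.tail).map fun z => wtc u z.1 z.2).sum

lemma alphaW_add_betaW (u L : List (Letter k)) : alphaW u L + betaW u L = wtcSum u L := by
  rw [alphaW, betaW, wtcSum]
  simp only [cnt]
  rw [sum_sum_ite_count, sum_sum_ite_count, Finset.sum_comm (γ := Fin k), sum_sum_ite_count,
    Finset.sum_comm (γ := Fin k), sum_sum_ite_count]
  simp only [← Multiset.sum_coe, ← Multiset.map_coe, ← Multiset.sum_map_sub,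
    ← Multiset.sum_map_add]
  refine congrArg Multiset.sum (Multiset.map_congr rfl fun ⟨⟨a, s⟩, ⟨b, t⟩⟩ _ => ?_)
  cases s <;> cases t <;> simp [wtc] <;> split_ifs <;> norm_num

noncomputable def omegaLetter (x : Letter k) : ℝ := if x.2 then 1 / 2 else -(1 / 2)

lemma omegaLetter_invL (x : Letter k) : omegaLetter (invL x) = -omegaLetter x := by
  obtain ⟨a, _ | _⟩ := x <;> simp [omegaLetter, invL]

lemma invL_invL (x : Letter k) : invL (invL x) = x := by
  simp [invL]

lemma ne_invL_iff {x y : Letter k} : y ≠ invL x ↔ (x.1 = y.1 → x.2 = y.2) := by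
  obtain ⟨a, _ | _⟩ := x <;> obtain ⟨b, _ | _⟩ := y <;> simp [invL, eq_comm]

lemma abs_omegaLetter_sub_wtc (u : List (Letter k)) (p q : Letter k) :
    |omegaLetter p - wtc u p q| = 1 / 2 := by
  obtain ⟨a, _ | _⟩ := p <;> simp only [wtc, omegaLetter] <;> split_ifs <;> norm_num

lemma ne_invL_of_isReduced {L M : List (Letter k)} {x y : Letter k}
    (h : IsReduced (L ++ [x] ++ y :: M)) : y ≠ invL x :=
  have hxy : [x, y] <:+: L ++ [x] ++ y :: M := ⟨L, M, by simp⟩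
  ne_invL_iff.2 (isReduced_cons_cons.1 (h.infix hxy)).1

lemma invRev_cons_eq (x : Letter k) (L : List (Letter k)) :
    invRev (x :: L) = invRev L ++ [invL x] := by
  simp [invRev, invL]

lemma IsOriented.idxOf_ne (hu : IsOriented u) {x y : Letter k} (hxy : x ≠ y) :
    u.idxOf x ≠ u.idxOf y :=
  mt (List.idxOf_inj (hu.2 x)).1 hxy

lemma IsOriented.wtc_eq (hu : IsOriented u) {p q : Letter k} (hpq : q ≠ invL p) :
    wtc u p q = (if leftOf u (invL p) q then 1 else 0) - (if p.2 then 0 else 1) := by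
  have hne := hu.idxOf_ne hpq
  obtain ⟨a, _ | _⟩ := p <;> simp only [wtc, Bool.false_eq_true, ↓reduceIte] <;> split_ifs <;>
    simp only [leftOf, invL, Bool.not_false, Bool.not_true] at * <;> first | omega | norm_num

lemma IsOriented.wtc_add_wtc_invL (hu : IsOriented u) {x y : Letter k} (hxy : y ≠ invL x) :
    wtc u x y + wtc u (invL y) (invL x) = omegaLetter x - omegaLetter y := by
  have hyx : invL x ≠ invL (invL y) := by rw [invL_invL]; exact hxy.symm
  have hne := hu.idxOf_ne hxy
  rw [hu.wtc_eq hxy, hu.wtc_eq hyx, invL_invL]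
  obtain ⟨a, _ | _⟩ := x <;> obtain ⟨b, _ | _⟩ := y <;>
    simp only [omegaLetter, invL, Bool.not_false, Bool.not_true, Bool.false_eq_true,
      ↓reduceIte] <;> split_ifs <;>
    simp only [leftOf, invL, Bool.not_false, Bool.not_true] at * <;> first | omega | norm_num

lemma IsOriented.abs_wtc_add_wtc_sub_wtc (hu : IsOriented u) {p c q : Letter k}
    (hpc : c ≠ invL p) (hcq : q ≠ c) (hpq : q ≠ invL p) :
    |wtc u p c + wtc u (invL c) q - wtc u p q + omegaLetter c| = 1 / 2 := by
  have hcq' : q ≠ invL (invL c) := by rwa [invL_invL]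
  have h₁ := hu.idxOf_ne hpc
  have h₂ := hu.idxOf_ne hcq
  have h₃ := hu.idxOf_ne hpq
  rw [hu.wtc_eq hpc, hu.wtc_eq hcq', hu.wtc_eq hpq, invL_invL]
  obtain ⟨a, _ | _⟩ := p <;> obtain ⟨m, _ | _⟩ := c <;>
    simp only [omegaLetter, invL, Bool.not_false, Bool.not_true, Bool.false_eq_true,
      ↓reduceIte] <;> split_ifs <;>
    simp only [leftOf, invL, Bool.not_false, Bool.not_true] at * <;> first | omega | norm_num

lemma omegaW_append_singleton (L : List (Letter k)) (x : Letter k) :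
    omegaW (L ++ [x]) = omegaLetter x := by
  simp [omegaW, omegaLetter]

lemma omegaW_append_cons (L M : List (Letter k)) (x : Letter k) :
    omegaW (L ++ x :: M) = omegaW (x :: M) := by
  simp only [omegaW, List.getLast?_append, List.getLast?_cons, Option.some_or]

@[simp] lemma wtcSum_nil (u : List (Letter k)) : wtcSum u [] = 0 := rfl

@[simp] lemma wtcSum_singleton (u : List (Letter k)) (x : Letter k) : wtcSum u [x] = 0 := rfl

lemma wtcSum_cons_cons (u L : List (Letter k)) (x y : Letter k) :
    wtcSum u (x :: y :: L) = wtc u x y + wtcSum u (y :: L) := by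
  simp [wtcSum]

lemma wtcSum_append_cons (u L M : List (Letter k)) (x : Letter k) :
    wtcSum u (L ++ x :: M) = wtcSum u (L ++ [x]) + wtcSum u (x :: M) := by
  induction L with
  | nil => simp
  | cons y L ih =>
    rcases L with _ | ⟨z, L⟩
    · simp [wtcSum_cons_cons]
    · simp only [List.cons_append] at ih ⊢
      rw [wtcSum_cons_cons, ih, wtcSum_cons_cons, add_assoc]

noncomputable def weight (u L : List (Letter k)) : ℝ := wtcSum u L + omegaW L

lemma tau_eq_weight (u : List (Letter k)) (g : FreeGroup (Fin k)) :
    tau u g = weight u g.toWord := by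
  rw [tau, alphaW_add_betaW, weight]

noncomputable def weightDefect (u L M : List (Letter k)) : ℝ :=
  weight u L + weight u M - weight u (L ++ M)

lemma weightDefect_nil_left (u M : List (Letter k)) : weightDefect u [] M = 0 := by
  simp [weightDefect, weight, omegaW]

lemma weightDefect_nil_right (u L : List (Letter k)) : weightDefect u L [] = 0 := by
  simp [weightDefect, weight, omegaW]

lemma weightDefect_concat_cons (u L M : List (Letter k)) (p q : Letter k) :
    weightDefect u (L ++ [p]) (q :: M) = omegaLetter p - wtc u p q := by
  have hsplit : wtcSum u (L ++ [p] ++ q :: M) =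
      wtcSum u (L ++ [p]) + wtc u p q + wtcSum u (q :: M) := by
    rw [wtcSum_append_cons, List.append_assoc, List.singleton_append, wtcSum_append_cons,
      wtcSum_cons_cons, wtcSum_singleton, add_zero]
  rw [weightDefect, weight, weight, weight, hsplit, omegaW_append_singleton, omegaW_append_cons]
  ring

lemma IsOriented.weight_add_weight_invRev (hu : IsOriented u)
    {C : List (Letter k)} (hC : IsReduced C) : weight u C + weight u (invRev C) = 0 := by
  induction C with
  | nil => simp [weight, invRev, omegaW]
  | cons x C ih =>
    rcases C with _ | ⟨y, C⟩
    · obtain ⟨a, _ | _⟩ := x <;> simp [weight, invRev, omegaW]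
    obtain ⟨hxy, hC⟩ := isReduced_cons_cons.1 hC
    have hy : invRev (y :: C) = invRev C ++ [invL y] := by simp [invRev, invL]
    have hxy_inv : invRev (x :: y :: C) = invRev C ++ [invL y] ++ [invL x] := by
      simp [invRev, invL]
    have hcons : weight u (x :: y :: C) = wtc u x y + weight u (y :: C) := by
      have := omegaW_append_cons [x] C y
      rw [List.singleton_append] at this
      rw [weight, weight, wtcSum_cons_cons, this, add_assoc]
    have hsingle : weight u [invL x] = omegaLetter (invL x) := by
      simp [weight, omegaW, omegaLetter]
    have hjoin := weightDefect_concat_cons u (invRev C) [] (invL y) (invL x)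
    rw [weightDefect, hsingle, ← hxy_inv] at hjoin
    rw [hy] at ih
    linarith [ih hC, hu.wtc_add_wtc_invL (ne_invL_iff.2 hxy), omegaLetter_invL x,
      omegaLetter_invL y]

lemma IsOriented.abs_weight_add_weight_sub_weight (hu : IsOriented u) {P C Q : List (Letter k)}
    (h₁ : IsReduced (P ++ C)) (h₂ : IsReduced (invRev C ++ Q)) (h₃ : IsReduced (P ++ Q))
    (hPC : P ++ C ≠ []) (hCQ : invRev C ++ Q ≠ []) (hPQ : P ++ Q ≠ []) :
    |weight u (P ++ C) + weight u (invRev C ++ Q) - weight u (P ++ Q)| = 1 / 2 := by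
  have hC := hu.weight_add_weight_invRev (h₁.infix (List.suffix_append P C).isInfix)
  have key : weight u (P ++ C) + weight u (invRev C ++ Q) - weight u (P ++ Q) =
      weightDefect u P Q - weightDefect u P C - weightDefect u (invRev C) Q := by
    simp only [weightDefect]
    linarith
  rw [key]
  rcases P.eq_nil_or_concat with rfl | ⟨P, p, rfl⟩ <;>
    rcases Q with _ | ⟨q, Q⟩ <;> rcases C with _ | ⟨c, C⟩ <;>
    simp only [List.concat_eq_append, invRev_empty, invRev_cons_eq, List.append_nil,
      List.nil_append, weightDefect_nil_left, weightDefect_nil_right, weightDefect_concat_cons,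
      sub_zero, zero_sub, abs_neg, ne_eq, not_true_eq_false] at *
  case inr.cons.cons =>
    have hpc := ne_invL_of_isReduced h₁
    have hcq : q ≠ c := by simpa only [invL_invL] using ne_invL_of_isReduced h₂
    have hpq := ne_invL_of_isReduced h₃
    rw [← hu.abs_wtc_add_wtc_sub_wtc hpc hcq hpq, omegaLetter_invL]
    congr 1
    ring
  all_goals exact abs_omegaLetter_sub_wtc _ _ _

lemma tau_one : tau u (1 : FreeGroup (Fin k)) = 0 := by
  simp [tau_eq_weight, weight, omegaW]

lemma IsOriented.tau_inv (hu : IsOriented u) (g : FreeGroup (Fin k)) :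
    tau u g⁻¹ = -tau u g := by
  rw [tau_eq_weight, tau_eq_weight, toWord_inv]
  linarith [hu.weight_add_weight_invRev (isReduced_toWord (x := g))]

lemma IsOriented.abs_tau_add_tau_sub_tau_mul (hu : IsOriented u) (g h : FreeGroup (Fin k)) :
    |tau u g + tau u h - tau u (g * h)| = if g = 1 ∨ h = 1 ∨ g * h = 1 then 0 else 1 / 2 := by
  split_ifs with hdeg
  · rcases hdeg with rfl | rfl | hgh
    · simp [tau_one]
    · simp [tau_one]
    · rw [eq_inv_of_mul_eq_one_right hgh, mul_inv_cancel, hu.tau_inv, tau_one]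
      simp
  · obtain ⟨hg, hh, hgh⟩ : g ≠ 1 ∧ h ≠ 1 ∧ g * h ≠ 1 := by tauto
    obtain ⟨P, C, Q, e₁, e₂, e₃⟩ := exists_toWord_mul_eq g h
    rw [tau_eq_weight, tau_eq_weight, tau_eq_weight, e₁, e₂, e₃]
    refine hu.abs_weight_add_weight_sub_weight (e₁ ▸ isReduced_toWord) (e₂ ▸ isReduced_toWord)
      (e₃ ▸ isReduced_toWord) ?_ ?_ ?_ <;>
    simpa [← e₁, ← e₂, ← e₃]

end Weight

theorem stmt3 {k : ℕ} (hk : 2 ≤ k) (u : List (Letter k)) (hu : IsOriented u) :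
    (∀ g h : FreeGroup (Fin k),
      |tau u g + tau u h - tau u (g * h)| =
        if g = 1 ∨ h = 1 ∨ g * h = 1 then 0 else 1 / 2)
    ∧ IsGreatest
        {d : ℝ | ∃ g h : FreeGroup (Fin k), d = |tau u g + tau u h - tau u (g * h)|}
        (1 / 2) := by
  set a : FreeGroup (Fin k) := of ⟨0, by omega⟩
  have ha : a * a ≠ 1 := by
    rw [← sq, ← toWord_injective.ne_iff]
    simp [a]
  refine ⟨hu.abs_tau_add_tau_sub_tau_mul, ⟨a, a, ?_⟩, ?_⟩
  · rw [hu.abs_tau_add_tau_sub_tau_mul, if_neg (by simp [a, ha])]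
  · rintro _ ⟨g, h, rfl⟩
    rw [hu.abs_tau_add_tau_sub_tau_mul]
    split_ifs <;> norm_num
end

section
/- Let u be an oriented word of rank k ≥ 2, let x and y be two distinct letters in A ∪ A^{-1}, and let f and g be nontrivial reduced words ending in x and y respectively. Then τ_u(fg^{-1}) − τ_u(f) − τ_u(g^{-1}) = 1/2 if x^{-1} occurs to the left of y^{-1} in u, and −1/2 if y^{-1} occurs to the left of x^{-1} in u. -/
open FreeGroup

/-! Over reduced words, `α_u` and `β_u` count bigrams, so they are additive under concatenation
up to the bigram at the junction, while `ω` only sees the last letter. Since `x ≠ y`, `f g⁻¹` is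
the reduced concatenation of `f` and `g⁻¹` with junction bigram `x y⁻¹`, so the defect is
`wtc_u(x, y⁻¹) − ω(x)`, which is `±1/2` according to the relative position of `x⁻¹` and `y⁻¹`. -/

namespace FreeGroup

variable {α : Type*} [DecidableEq α]

theorem toWord_mul_of_isReduced {f g : FreeGroup α} (h : IsReduced (f.toWord ++ g.toWord)) :
    (f * g).toWord = f.toWord ++ g.toWord := by
  rw [toWord_mul, h.reduce_eq]

theorem head?_toWord_inv {g : FreeGroup α} {y : α × Bool} (hy : g.toWord.getLast? = some y) :
    (g⁻¹).toWord.head? = some (y.1, !y.2) := by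
  rw [toWord_inv, invRev, List.head?_reverse, List.getLast?_map, hy]
  rfl

theorem isReduced_toWord_append_toWord_inv {f g : FreeGroup α} {x y : α × Bool}
    (hx : f.toWord.getLast? = some x) (hy : g.toWord.getLast? = some y) (hxy : x ≠ y) :
    IsReduced (f.toWord ++ (g⁻¹).toWord) := by
  refine List.isChain_append.mpr ⟨isReduced_toWord, isReduced_toWord, ?_⟩
  rw [hx, head?_toWord_inv hy]
  simp only [Option.mem_def, Option.some.injEq, forall_eq']
  intro hfst
  by_contra hsnd
  exact hxy (Prod.ext hfst (by simpa using hsnd))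

end FreeGroup

theorem List.zip_tail_append {α : Type*} {A B : List α} {a b : α}
    (hA : A.getLast? = some a) (hB : B.head? = some b) :
    (A ++ B).zip (A ++ B).tail = A.zip A.tail ++ (a, b) :: B.zip B.tail := by
  induction A with
  | nil => simp at hA
  | cons c A ih =>
    rcases A with _ | ⟨d, A⟩
    · obtain ⟨B, rfl⟩ := List.head?_eq_some_iff.mp hB
      simp_all
    · rw [List.getLast?_cons_cons] at hA
      simp only [List.cons_append, List.tail_cons, List.zip_cons_cons] at ih ⊢
      rw [ih hA]

section
variable {ι M : Type*} [Fintype ι] [DecidableEq ι] [AddCommMonoid M]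
  (P : ι → ι → Prop) [DecidableRel P] (i j : ι) (m : M)

theorem Fintype.sum_sum_ite_ite_eq_and_eq :
    (∑ a, ∑ b, if P a b then (if a = i ∧ b = j then m else 0) else 0) = if P i j then m else 0 := by
  simp only [← ite_and, and_comm (a := P _ _), and_assoc]
  simp [ite_and]

theorem Fintype.sum_sum_ite_ite_eq_and_eq' :
    (∑ a, ∑ b, if P a b then (if b = i ∧ a = j then m else 0) else 0) = if P j i then m else 0 := by
  rw [Finset.sum_comm]
  exact Fintype.sum_sum_ite_ite_eq_and_eq (fun a b => P b a) i j m

end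

section Weights

variable {k : ℕ}

theorem invL_injective : Function.Injective (invL (k := k)) := fun x y h => by
  simpa [invL, Prod.ext_iff] using h

theorem leftOf_or_leftOf {u : List (Letter k)} {x y : Letter k} (hx : x ∈ u) (hxy : x ≠ y) :
    leftOf u x y ∨ leftOf u y x :=
  Nat.lt_or_gt_of_ne (mt (List.idxOf_inj hx).mp hxy)

theorem leftOf_iff_not_leftOf {u : List (Letter k)} {x y : Letter k} (hx : x ∈ u)
    (hxy : x ≠ y) : leftOf u y x ↔ ¬ leftOf u x y :=
  ⟨fun hyx hxy' => lt_asymm hyx hxy', (leftOf_or_leftOf hx hxy).resolve_left⟩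

theorem cnt_append {A B : List (Letter k)} {a b : Letter k}
    (hA : A.getLast? = some a) (hB : B.head? = some b) (p q : Letter k) :
    cnt (A ++ B) p q = cnt A p q + cnt B p q + cnt [a, b] p q := by
  simp only [cnt, List.zip_tail_append hA hB, List.count_append, List.count_cons,
    List.tail_cons, List.zip_cons_cons, List.zip_nil_right, List.count_nil]
  omega

theorem cnt_pair (x y p q : Letter k) : cnt [x, y] p q = if p = x ∧ q = y then 1 else 0 := by
  by_cases h : p = x ∧ q = y
  · simp [cnt, h]
  · simp only [cnt, List.tail_cons, List.zip_cons_cons, List.zip_nil_right,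
      List.count_singleton, h]
    grind

theorem alphaW_append (u : List (Letter k)) {A B : List (Letter k)} {a b : Letter k}
    (hA : A.getLast? = some a) (hB : B.head? = some b) :
    alphaW u (A ++ B) = alphaW u A + alphaW u B + alphaW u [a, b] := by
  simp only [alphaW, cnt_append hA hB, Nat.cast_add, ite_add_zero, Finset.sum_add_distrib]
  ring

theorem betaW_append (u : List (Letter k)) {A B : List (Letter k)} {a b : Letter k}
    (hA : A.getLast? = some a) (hB : B.head? = some b) :
    betaW u (A ++ B) = betaW u A + betaW u B + betaW u [a, b] := by
  simp only [betaW, cnt_append hA hB, Nat.cast_add, ite_add_zero, Finset.sum_add_distrib]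
  ring

theorem alphaW_pair_add_betaW_pair (u : List (Letter k)) (x y : Letter k) :
    alphaW u [x, y] + betaW u [x, y] = wtc u x y := by
  obtain ⟨i, s⟩ := x
  obtain ⟨j, t⟩ := y
  cases s <;> cases t <;>
    simp [alphaW, betaW, wtc, cnt_pair, Fintype.sum_sum_ite_ite_eq_and_eq,
      Fintype.sum_sum_ite_ite_eq_and_eq', neg_ite]

theorem omegaW_of_getLast?_eq_some {L : List (Letter k)} {x : Letter k}
    (h : L.getLast? = some x) : omegaW L = if x.2 then 1 / 2 else -(1 / 2) := by
  rw [omegaW, h]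

theorem omegaW_append {A B : List (Letter k)} {b : Letter k} (hB : B.head? = some b) :
    omegaW (A ++ B) = omegaW B := by
  obtain ⟨B, rfl⟩ := List.head?_eq_some_iff.mp hB
  rw [omegaW, omegaW, List.getLast?_append_cons]

theorem tau_mul_of_isReduced (u : List (Letter k)) {f g : FreeGroup (Fin k)} {a b : Letter k}
    (ha : f.toWord.getLast? = some a) (hb : g.toWord.head? = some b)
    (h : IsReduced (f.toWord ++ g.toWord)) :
    tau u (f * g) = tau u f + tau u g + wtc u a b - omegaW f.toWord := by
  rw [tau, toWord_mul_of_isReduced h, alphaW_append u ha hb, betaW_append u ha hb,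
    omegaW_append hb, ← alphaW_pair_add_betaW_pair, tau, tau]
  ring

theorem wtc_invL_sub_omega (u : List (Letter k)) {x y : Letter k} (hx : invL x ∈ u)
    (hxy : x ≠ y) :
    wtc u x (invL y) - (if x.2 then 1 / 2 else -(1 / 2))
      = if leftOf u (invL x) (invL y) then 1 / 2 else -(1 / 2) := by
  have hswap := leftOf_iff_not_leftOf hx (invL_injective.ne hxy)
  obtain ⟨i, s⟩ := x
  cases s
  · rw [show invL (i, false) = (i, true) from rfl] at hswap ⊢
    simp only [wtc, Bool.false_eq_true, if_false, hswap]
    split_ifs <;> norm_num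
  · rw [show invL (i, true) = (i, false) from rfl]
    simp only [wtc, if_true]
    split_ifs <;> norm_num

end Weights

theorem stmt5_general {k : ℕ} (u : List (Letter k)) (hu : IsOriented u)
    (x y : Letter k) (hxy : x ≠ y) (f g : FreeGroup (Fin k))
    (hfx : f.toWord.getLast? = some x) (hgy : g.toWord.getLast? = some y) :
    tau u (f * g⁻¹) - tau u f - tau u g⁻¹
      = if leftOf u (invL x) (invL y) then 1 / 2 else -(1 / 2) := by
  have hhead : (g⁻¹).toWord.head? = some (invL y) := head?_toWord_inv hgy
  rw [tau_mul_of_isReduced u hfx hhead (isReduced_toWord_append_toWord_inv hfx hgy hxy),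
    omegaW_of_getLast?_eq_some hfx, ← wtc_invL_sub_omega u (hu.2 (invL x)) hxy]
  ring

theorem stmt5 {k : ℕ} (hk : 2 ≤ k) (u : List (Letter k)) (hu : IsOriented u)
    (x y : Letter k) (hxy : x ≠ y) (f g : FreeGroup (Fin k))
    (hf : f ≠ 1) (hg : g ≠ 1)
    (hfx : f.toWord.getLast? = some x) (hgy : g.toWord.getLast? = some y) :
    tau u (f * g⁻¹) - tau u f - tau u g⁻¹
      = if leftOf u (invL x) (invL y) then 1 / 2 else -(1 / 2) :=
  stmt5_general u hu x y hxy f g hfx hgy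
end

section
/- Let G be a group and τ : G → ℝ a function with small relative defect. Then for every g ≠ e, τ(g) and τ(g^{-1}) have opposite signs; the set P = {g ∈ G : τ(g) > 0} satisfies G = P^{-1} ⊔ {e} ⊔ P (disjoint union) and is closed under multiplication. Consequently P is the positive cone of a left order on G, so G is left-orderable. -/
/-! Small defect at `(g, g⁻¹)`, where `τ (g * g⁻¹) = 0`, says `|τ g + τ g⁻¹| < |τ g| + |τ g⁻¹|`,
which forces `τ g` and `τ g⁻¹` to have strictly opposite signs. Small defect at `(g, h)` with
`τ g, τ h > 0` forces `τ (g * h) > 0`. Hence `{τ > 0}` is a positive cone, and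
`g ≤ h ↔ g = h ∨ 0 < τ (g⁻¹ * h)` is a left-invariant linear order. -/

open FreeGroup

theorem mul_neg_of_abs_add_lt {R : Type*} [Ring R] [LinearOrder R] [IsStrictOrderedRing R]
    {a b : R} (h : |a + b| < |a| + |b|) : a * b < 0 := by
  by_contra! hab
  exact h.ne ((abs_add_eq_add_abs_iff a b).2 (mul_nonneg_iff.1 hab))

def coneRel {G : Type*} [Group G] (P : G → Prop) (g h : G) : Prop :=
  g = h ∨ P (g⁻¹ * h)

section Cone

variable {G : Type*} [Group G] {P : G → Prop}

theorem coneRel_mul_left {a b c : G} (h : coneRel P b c) : coneRel P (a * b) (a * c) := by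
  rcases h with rfl | h
  · exact Or.inl rfl
  · exact Or.inr (by rwa [mul_inv_rev, mul_assoc, inv_mul_cancel_left])

theorem coneRel_one_left_and_ne_one_iff (hP1 : ¬ P 1) {g : G} :
    (coneRel P 1 g ∧ g ≠ 1) ↔ P g := by
  simp only [coneRel, inv_one, one_mul]
  constructor
  · rintro ⟨rfl | hg, hne⟩
    · exact absurd rfl hne
    · exact hg
  · intro hg
    exact ⟨Or.inr hg, by rintro rfl; exact hP1 hg⟩

theorem isLinearOrder_coneRel (hmul : ∀ a b, P a → P b → P (a * b))
    (hinv : ∀ g, P g → ¬ P g⁻¹) (htot : ∀ g, g ≠ 1 → P g ∨ P g⁻¹) :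
    IsLinearOrder G (coneRel P) where
  refl _ := Or.inl rfl
  trans := by
    rintro a b c (rfl | hab) (rfl | hbc)
    · exact Or.inl rfl
    · exact Or.inr hbc
    · exact Or.inr hab
    · exact Or.inr (by simpa [mul_assoc] using hmul _ _ hab hbc)
  antisymm := by
    rintro a b (rfl | hab) (hba | hba)
    · rfl
    · rfl
    · exact hba.symm
    · exact absurd (by simpa using hba) (hinv _ hab)
  total a b := by
    by_cases hab : a = b
    · exact Or.inl (Or.inl hab)
    · rcases htot (a⁻¹ * b) (by rwa [ne_eq, inv_mul_eq_one]) with h | h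
      · exact Or.inl (Or.inr h)
      · exact Or.inr (Or.inr (by simpa using h))

end Cone

namespace SmallRelDefect

variable {G : Type*} [Group G] {τ : G → ℝ}

theorem ne_one_of_pos (hτ : SmallRelDefect τ) {g : G} (hg : 0 < τ g) : g ≠ 1 := by
  rintro rfl
  exact hg.ne' hτ.1

theorem mul_inv_neg (hτ : SmallRelDefect τ) {g : G} (hg : g ≠ 1) : τ g * τ g⁻¹ < 0 := by
  apply mul_neg_of_abs_add_lt
  simpa [hτ.1] using hτ.2 g g⁻¹ (Or.inl hg)

theorem pos_and_inv_neg_or (hτ : SmallRelDefect τ) {g : G} (hg : g ≠ 1) :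
    (0 < τ g ∧ τ g⁻¹ < 0) ∨ (τ g < 0 ∧ 0 < τ g⁻¹) :=
  mul_neg_iff.1 (hτ.mul_inv_neg hg)

theorem not_pos_inv_of_pos (hτ : SmallRelDefect τ) {g : G} (hg : 0 < τ g) : ¬ 0 < τ g⁻¹ := by
  have := hτ.mul_inv_neg (hτ.ne_one_of_pos hg)
  intro hinv
  exact (mul_pos hg hinv).not_gt this

theorem pos_mul (hτ : SmallRelDefect τ) {g h : G} (hg : 0 < τ g) (hh : 0 < τ h) :
    0 < τ (g * h) := by
  have := hτ.2 g h (Or.inl (hτ.ne_one_of_pos hg))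
  rw [abs_of_pos hg, abs_of_pos hh, abs_sub_lt_iff] at this
  linarith

end SmallRelDefect

theorem stmt8 {G : Type*} [Group G] (τ : G → ℝ) (hτ : SmallRelDefect τ) :
    (∀ g : G, g ≠ 1 → ((0 < τ g ∧ τ g⁻¹ < 0) ∨ (τ g < 0 ∧ 0 < τ g⁻¹)))
    ∧ (∀ g h : G, 0 < τ g → 0 < τ h → 0 < τ (g * h))
    ∧ (∀ g : G,
        (0 < τ g ∧ g ≠ 1 ∧ ¬ 0 < τ g⁻¹)
        ∨ (g = 1 ∧ τ g = 0 ∧ τ g⁻¹ = 0)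
        ∨ (0 < τ g⁻¹ ∧ g ≠ 1 ∧ ¬ 0 < τ g))
    ∧ ∃ r : G → G → Prop, IsLinearOrder G r
        ∧ (∀ a b c : G, r b c → r (a * b) (a * c))
        ∧ ∀ g : G, (r 1 g ∧ g ≠ 1) ↔ 0 < τ g := by
  have hP1 : ¬ 0 < τ 1 := by simp [hτ.1]
  refine ⟨fun g => hτ.pos_and_inv_neg_or, fun g h => hτ.pos_mul, fun g => ?_,
    coneRel (fun g => 0 < τ g), ?_, fun a b c => coneRel_mul_left,
    fun g => coneRel_one_left_and_ne_one_iff hP1⟩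
  · by_cases hg : g = 1
    · subst hg
      simp [hτ.1]
    · rcases hτ.pos_and_inv_neg_or hg with ⟨hpos, hneg⟩ | ⟨hneg, hpos⟩
      · exact Or.inl ⟨hpos, hg, hneg.not_gt⟩
      · exact Or.inr (Or.inr ⟨hpos, hg, hneg.not_gt⟩)
  · refine isLinearOrder_coneRel (fun a b => hτ.pos_mul) (fun g => hτ.not_pos_inv_of_pos)
      fun g hg => ?_
    rcases hτ.pos_and_inv_neg_or hg with h | h
    exacts [Or.inl h.1, Or.inr h.2]
end

section
/- Let k ≥ 2. The left order ≤_u on F_k induced by an oriented word u extends the lexicographic order on the free monoid A* based on a_1 < a_2 < ... < a_k if and only if u has the form a_1 a_2 ... a_k a_{j_1}^{-1} a_{j_2}^{-1} ... a_{j_k}^{-1} for some permutation (j_1,...,j_k) of (1,...,k). -/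
open FreeGroup

/-!
Both `α_u + β_u` and `ω` are local: `α_u + β_u` is the sum of the contributions `wtc_u x y` of
the two-letter subwords `x y` of the reduced word, and `ω` reads the last letter. If `v <_lex w`
first differ in letters `a < b` (or `v` is a proper prefix of `w`), the reduced form of `v⁻¹ w`
after cancelling the common prefix consists of negative letters, then the junction `a⁻¹ b`, then
positive letters. For `u = a_1 ⋯ a_k a_{j_1}⁻¹ ⋯ a_{j_k}⁻¹` every such subword contributes `0`,
so `τ_u(v⁻¹ w) = ω = 1/2`.

Conversely, `τ_u(a⁻¹ b) = 1/2 - [b before a in u]` forces the positive letters to appear in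
increasing order, and `τ_u((a_1 b a)⁻¹ a_2) ≤ 1/2 - [b⁻¹ before a in u]` forces every positive
letter before every negative one; an oriented word with these two properties has the stated form.
-/

theorem List.IsChain.rel_of_mem_zip_tail {α : Type*} {R : α → α → Prop} :
    ∀ {l : List α}, l.IsChain R → ∀ p ∈ l.zip l.tail, R p.1 p.2
  | [], _, _, hp => by simp at hp
  | [_], _, _, hp => by simp at hp
  | _ :: _ :: _, h, _, hp => by
    rw [List.isChain_cons_cons] at h
    rw [List.tail_cons, List.zip_cons_cons, List.mem_cons] at hp
    rcases hp with rfl | hp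
    · exact h.1
    · exact h.2.rel_of_mem_zip_tail _ hp

theorem List.eq_filter_append_filter_not {α : Type*} (p : α → Bool) :
    ∀ {l : List α}, l.Pairwise (fun x y => p x = false → p y = false) →
      l = l.filter p ++ l.filter (fun x => !p x)
  | [], _ => rfl
  | x :: l, h => by
    rw [List.pairwise_cons] at h
    by_cases hx : p x
    · simp only [List.filter_cons, hx, if_true, Bool.not_true, List.cons_append]
      exact congrArg _ (List.eq_filter_append_filter_not p h.2)
    · have hl : ∀ y ∈ l, p y = false := fun y hy => h.1 y hy (by simpa using hx)
      have hnil : l.filter p = [] := List.filter_eq_nil_iff.2 (by simpa using hl)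
      have hall : l.filter (fun x => !p x) = l := List.filter_eq_self.2 (by simpa using hl)
      simp [hx, hnil, hall]

theorem List.exists_perm_eq_map_finRange {k : ℕ} {l : List (Fin k)} (hnd : l.Nodup)
    (hl : ∀ x, x ∈ l) : ∃ σ : Equiv.Perm (Fin k), l = (List.finRange k).map σ := by
  have hlen : l.length = k := by
    simpa using Fintype.card_congr (hnd.getEquivOfForallMemList l hl)
  refine ⟨(finCongr hlen.symm).trans (hnd.getEquivOfForallMemList l hl), ?_⟩
  exact List.ext_getElem (by simp [hlen]) fun _ _ _ => by simp

theorem List.idxOf_map_of_injective {α β : Type*} [BEq α] [LawfulBEq α] [BEq β] [LawfulBEq β]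
    {f : α → β} (hf : Function.Injective f) (a : α) (l : List α) :
    (l.map f).idxOf (f a) = l.idxOf a := by
  induction l with
  | nil => rfl
  | cons b l ih =>
    have hba : (f b == f a) = (b == a) := by
      rw [Bool.eq_iff_iff, beq_iff_eq, beq_iff_eq, hf.eq_iff]
    simp only [List.map_cons, List.idxOf_cons, ih, hba]

theorem FreeGroup.toWord_inv_mk_mul_mk {α : Type*} [DecidableEq α] (v w : List α)
    (hvw : ∀ a ∈ v.head?, ∀ b ∈ w.head?, a ≠ b) :
    ((mk (v.map fun a => (a, true)))⁻¹ * mk (w.map fun a => (a, true))).toWord =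
      (v.map fun a => (a, false)).reverse ++ w.map fun a => (a, true) := by
  rw [inv_mk, mul_mk, toWord_mk]
  have hinv : invRev (v.map fun a => (a, true)) = (v.map fun a => (a, false)).reverse := by
    simp [invRev, Function.comp_def]
  rw [hinv]
  refine IsReduced.reduce_eq (List.isChain_append.2 ⟨?_, ?_, ?_⟩)
  · exact List.Pairwise.isChain (List.pairwise_of_forall_mem_list (by simp))
  · exact List.Pairwise.isChain (List.pairwise_of_forall_mem_list (by simp))
  · intro x hx y hy
    simp only [List.getLast?_reverse, List.head?_map, Option.mem_def,
      Option.map_eq_some_iff] at hx hy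
    obtain ⟨a, ha, rfl⟩ := hx
    obtain ⟨b, hb, rfl⟩ := hy
    exact fun hab => absurd hab (hvw a ha b hb)

namespace OrientedWord

variable {k : ℕ}

theorem sum_sum_ite_count (l : List (Letter k × Letter k)) (s t : Bool)
    (c : Fin k → Fin k → Prop) [∀ a b, Decidable (c a b)] :
    (∑ a : Fin k, ∑ b : Fin k, if c a b then (l.count ((a, s), (b, t)) : ℝ) else 0) =
      (l.map fun p => if p.1.2 = s ∧ p.2.2 = t ∧ c p.1.1 p.2.1 then (1 : ℝ) else 0).sum := by
  induction l with
  | nil => simp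
  | cons p l ih =>
    obtain ⟨⟨a, s'⟩, ⟨b, t'⟩⟩ := p
    simp only [List.count_cons, List.map_cons, List.sum_cons, ← ih]
    push_cast
    simp only [ite_add_zero, Finset.sum_add_distrib]
    rw [add_comm]
    congr 1
    simp only [beq_iff_eq, Prod.mk.injEq]
    rw [Fintype.sum_eq_single a fun x hx => by simp [Ne.symm hx]]
    rw [Fintype.sum_eq_single b fun y hy => by simp [Ne.symm hy]]
    by_cases hs : s' = s <;> by_cases ht : t' = t <;> by_cases hc : c a b <;> simp [hs, ht, hc]

theorem sum_sum_ite_count_swap (l : List (Letter k × Letter k)) (s t : Bool)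
    (c : Fin k → Fin k → Prop) [∀ a b, Decidable (c a b)] :
    (∑ a : Fin k, ∑ b : Fin k, if c a b then (l.count ((b, s), (a, t)) : ℝ) else 0) =
      (l.map fun p => if p.1.2 = s ∧ p.2.2 = t ∧ c p.2.1 p.1.1 then (1 : ℝ) else 0).sum := by
  rw [Finset.sum_comm]
  exact sum_sum_ite_count l s t fun b a => c a b

theorem alphaW_add_betaW (u L : List (Letter k)) :
    alphaW u L + betaW u L = ((L.zip L.tail).map fun p => wtc u p.1 p.2).sum := by
  simp only [alphaW, betaW, cnt, sum_sum_ite_count, sum_sum_ite_count_swap]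
  induction L.zip L.tail with
  | nil => simp
  | cons p l ih =>
    simp only [List.map_cons, List.sum_cons, ← ih]
    obtain ⟨⟨a, s⟩, ⟨b, t⟩⟩ := p
    cases s <;> cases t <;> simp [wtc] <;> split_ifs <;> ring

theorem tau_eq_sum_wtc (u : List (Letter k)) (g : FreeGroup (Fin k)) :
    tau u g =
      ((g.toWord.zip g.toWord.tail).map fun p => wtc u p.1 p.2).sum + omegaW g.toWord := by
  rw [tau, alphaW_add_betaW]

theorem wtc_neg_nonpos (u : List (Letter k)) (a : Fin k) (y : Letter k) :
    wtc u (a, false) y ≤ 0 := by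
  simp only [wtc, Bool.false_eq_true, if_false]
  split_ifs <;> norm_num

/-- Since `g <_u h ↔ 0 < τ_u (g⁻¹ h)`, this says that `≤_u` extends the lexicographic order. -/
def ExtendsLex (u : List (Letter k)) : Prop :=
  ∀ v w : List (Fin k), List.Lex (· < ·) v w →
    0 < tau u ((mk (v.map fun a => (a, true)))⁻¹ * mk (w.map fun a => (a, true)))

def standardWord (σ : Equiv.Perm (Fin k)) : List (Letter k) :=
  ((List.finRange k).map fun i => (i, true)) ++ (List.finRange k).map fun i => (σ i, false)

section Combinatorics

variable {u : List (Letter k)}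

theorem pairwise_leftOf (hu : u.Nodup) : u.Pairwise (leftOf u) := by
  refine List.pairwise_iff_getElem.2 fun i j hi hj hij => ?_
  rw [leftOf, hu.idxOf_getElem, hu.idxOf_getElem]
  exact hij

theorem leftOf_or_leftOf (hu : IsOriented u) {x y : Letter k} (hxy : x ≠ y) :
    leftOf u x y ∨ leftOf u y x := by
  have : u.idxOf x ≠ u.idxOf y := fun h => hxy ((List.idxOf_inj (hu.2 x)).1 h)
  unfold leftOf
  omega

theorem not_leftOf_of_leftOf {x y : Letter k} (h : leftOf u x y) : ¬ leftOf u y x :=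
  Nat.lt_asymm h

theorem eq_filter_pos_append_filter_neg (hu : u.Nodup)
    (hposneg : ∀ a b : Fin k, leftOf u (a, true) (b, false)) :
    u = u.filter (·.2) ++ u.filter (fun x => !x.2) := by
  refine List.eq_filter_append_filter_not _ ((pairwise_leftOf hu).imp fun {x y} hxy hx => ?_)
  rcases x with ⟨a, _ | _⟩ <;> rcases y with ⟨b, _ | _⟩
  · rfl
  · exact absurd (hposneg b a) (not_leftOf_of_leftOf hxy)
  all_goals simp at hx

theorem filter_pos_eq_map_finRange (hu : IsOriented u)
    (hpos : ∀ a b : Fin k, a < b → leftOf u (a, true) (b, true)) :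
    u.filter (·.2) = (List.finRange k).map fun i => (i, true) := by
  refine List.Perm.eq_of_pairwise (le := fun x y => x.1 < y.1)
    (fun _ _ _ _ h h' => absurd h (lt_asymm h')) ?_
    ((List.pairwise_lt_finRange k).map _ fun _ _ h => h) ?_
  · refine ((pairwise_leftOf hu.1).filter _).imp_of_mem fun {x y} hx hy hxy => ?_
    rcases x with ⟨a, _ | _⟩ <;> rcases y with ⟨b, _ | _⟩ <;> simp at hx hy
    rcases lt_trichotomy a b with hab | rfl | hba
    · exact hab
    · exact absurd hxy (Nat.lt_irrefl _)
    · exact absurd (hpos b a hba) (not_leftOf_of_leftOf hxy)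
  · refine (List.perm_ext_iff_of_nodup (hu.1.filter _)
      ((List.nodup_finRange k).map fun a b h => by simpa using h)).2 fun x => ?_
    rcases x with ⟨a, _ | _⟩ <;> simp [hu.2]

theorem exists_perm_filter_neg_eq_map_finRange (hu : IsOriented u) :
    ∃ σ : Equiv.Perm (Fin k),
      u.filter (fun x => !x.2) = (List.finRange k).map fun i => (σ i, false) := by
  set N := u.filter (fun x => !x.2)
  have hneg : ∀ x ∈ N, x = (x.1, false) := fun x hx => by
    rcases x with ⟨a, _ | _⟩
    · rfl
    · simp [N] at hx
  obtain ⟨σ, hσ⟩ := List.exists_perm_eq_map_finRange (l := N.map Prod.fst)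
    ((hu.1.filter _).map_on fun x hx y hy h => by rw [hneg x hx, hneg y hy, h])
    (fun a => List.mem_map.2 ⟨(a, false), by simp [N, hu.2], rfl⟩)
  refine ⟨σ, ?_⟩
  calc N = (N.map Prod.fst).map fun a => (a, false) := by
        rw [List.map_map]; nth_rewrite 1 [← List.map_id N]; exact List.map_congr_left hneg
    _ = _ := by rw [hσ, List.map_map]; rfl

theorem exists_eq_standardWord_of_leftOf (hu : IsOriented u)
    (hpos : ∀ a b : Fin k, a < b → leftOf u (a, true) (b, true))
    (hposneg : ∀ a b : Fin k, leftOf u (a, true) (b, false)) :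
    ∃ σ : Equiv.Perm (Fin k), u = standardWord σ := by
  obtain ⟨σ, hσ⟩ := exists_perm_filter_neg_eq_map_finRange hu
  refine ⟨σ, (eq_filter_pos_append_filter_neg hu.1 hposneg).trans ?_⟩
  rw [filter_pos_eq_map_finRange hu hpos, hσ, standardWord]

end Combinatorics

section Forward

variable {u : List (Letter k)}

theorem ExtendsLex.leftOf_pos_pos (H : ExtendsLex u) (hu : IsOriented u) {a b : Fin k}
    (hab : a < b) : leftOf u (a, true) (b, true) := by
  refine (leftOf_or_leftOf hu (by simpa using hab.ne)).resolve_right fun hba => ?_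
  have htau := H [a] [b] (List.Lex.rel hab)
  rw [tau_eq_sum_wtc, toWord_inv_mk_mul_mk [a] [b] (by simpa using hab.ne)] at htau
  norm_num [wtc, hba, omegaW] at htau

theorem ExtendsLex.leftOf_pos_neg (hk : 2 ≤ k) (H : ExtendsLex u) (hu : IsOriented u)
    (a b : Fin k) : leftOf u (a, true) (b, false) := by
  refine (leftOf_or_leftOf hu (by simp)).resolve_right fun hba => ?_
  let c₀ : Fin k := ⟨0, by omega⟩
  let c₁ : Fin k := ⟨1, by omega⟩
  have htau := H [c₀, b, a] [c₁] (List.Lex.rel (by simp [c₀, c₁, Fin.lt_def]))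
  rw [tau_eq_sum_wtc,
    toWord_inv_mk_mul_mk [c₀, b, a] [c₁] (by simp [c₀, c₁, Fin.ext_iff]; omega)] at htau
  simp [omegaW] at htau
  have hab : wtc u (a, false) (b, false) = -1 := by simp [wtc, hba]
  linarith [wtc_neg_nonpos u b (c₀, false), wtc_neg_nonpos u c₀ (c₁, true)]

end Forward

section Standard

variable (σ : Equiv.Perm (Fin k))

theorem idxOf_standardWord_pos (a : Fin k) : (standardWord σ).idxOf (a, true) = a := by
  rw [standardWord, List.idxOf_append_of_mem (by simp),
    List.idxOf_map_of_injective (f := fun i : Fin k => (i, true))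
      (fun _ _ h => (Prod.mk.inj h).1), List.idxOf_finRange]

theorem le_idxOf_standardWord_neg (a : Fin k) : k ≤ (standardWord σ).idxOf (a, false) := by
  rw [standardWord, List.idxOf_append_of_notMem (by simp)]
  simp

theorem leftOf_standardWord_pos_pos {a b : Fin k} :
    leftOf (standardWord σ) (a, true) (b, true) ↔ a < b := by
  rw [leftOf, idxOf_standardWord_pos, idxOf_standardWord_pos, Fin.lt_def]

theorem not_leftOf_standardWord_neg_pos (a b : Fin k) :
    ¬ leftOf (standardWord σ) (a, false) (b, true) := by
  rw [leftOf, idxOf_standardWord_pos, not_lt]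
  exact b.isLt.le.trans (le_idxOf_standardWord_neg σ a)

theorem tau_standardWord_inv_mul_mk (v w : List (Fin k)) (hw : w ≠ [])
    (hvw : ∀ a ∈ v.head?, ∀ b ∈ w.head?, a < b) :
    tau (standardWord σ) ((mk (v.map fun a => (a, true)))⁻¹ * mk (w.map fun a => (a, true))) =
      1 / 2 := by
  rw [tau_eq_sum_wtc, toWord_inv_mk_mul_mk v w fun a ha b hb => (hvw a ha b hb).ne]
  set L := (v.map fun a => (a, false)).reverse ++ w.map fun a => (a, true)
  have hchain : L.IsChain fun x y => wtc (standardWord σ) x y = 0 := by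
    refine List.isChain_append.2 ⟨?_, ?_, ?_⟩
    · refine List.Pairwise.isChain (List.pairwise_of_forall_mem_list fun x hx y hy => ?_)
      simp only [List.mem_reverse, List.mem_map] at hx hy
      obtain ⟨a, -, rfl⟩ := hx
      obtain ⟨b, -, rfl⟩ := hy
      simp [wtc, not_leftOf_standardWord_neg_pos]
    · refine List.Pairwise.isChain (List.pairwise_of_forall_mem_list fun x hx y hy => ?_)
      simp only [List.mem_map] at hx hy
      obtain ⟨a, -, rfl⟩ := hx
      obtain ⟨b, -, rfl⟩ := hy
      simp [wtc, not_leftOf_standardWord_neg_pos]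
    · intro x hx y hy
      simp only [List.getLast?_reverse, List.head?_map, Option.mem_def,
        Option.map_eq_some_iff] at hx hy
      obtain ⟨a, ha, rfl⟩ := hx
      obtain ⟨b, hb, rfl⟩ := hy
      simp [wtc, leftOf_standardWord_pos_pos, (hvw a ha b hb).le]
  have hsum : ((L.zip L.tail).map fun p => wtc (standardWord σ) p.1 p.2).sum = 0 :=
    List.sum_eq_zero fun x hx => by
      obtain ⟨p, hp, rfl⟩ := List.mem_map.1 hx
      exact hchain.rel_of_mem_zip_tail p hp
  have hlast : omegaW L = 1 / 2 := by
    obtain ⟨w, c, rfl⟩ := (List.eq_nil_or_concat' _).resolve_left hw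
    simp [L, omegaW]
  rw [hsum, hlast, zero_add]

theorem extendsLex_standardWord : ExtendsLex (standardWord σ) := by
  intro v w h
  induction h with
  | nil => rw [tau_standardWord_inv_mul_mk σ _ _ (List.cons_ne_nil _ _) (by simp)]; norm_num
  | rel hab =>
    rw [tau_standardWord_inv_mul_mk σ _ _ (List.cons_ne_nil _ _) (by simpa using hab)]; norm_num
  | @cons a _ _ _ ih =>
    have hcons (l : List (Fin k)) :
        mk ((a :: l).map fun x => (x, true)) = of a * mk (l.map fun x => (x, true)) := rfl
    rwa [hcons, hcons, mul_inv_rev, mul_assoc, inv_mul_cancel_left]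

end Standard

theorem ExtendsLex.exists_eq_standardWord {u : List (Letter k)} (hk : 2 ≤ k) (H : ExtendsLex u)
    (hu : IsOriented u) : ∃ σ : Equiv.Perm (Fin k), u = standardWord σ :=
  exists_eq_standardWord_of_leftOf hu (fun _ _ => H.leftOf_pos_pos hu) (H.leftOf_pos_neg hk hu)

end OrientedWord

theorem stmt11 {k : ℕ} (hk : 2 ≤ k) (u : List (Letter k)) (hu : IsOriented u) :
    (∀ v w : List (Fin k), List.Lex (· < ·) v w →
      0 < tau u ((FreeGroup.mk (v.map fun a => (a, true)))⁻¹
                  * FreeGroup.mk (w.map fun a => (a, true))))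
    ↔ ∃ σ : Equiv.Perm (Fin k),
        u = ((List.finRange k).map fun i => ((i : Fin k), true))
            ++ ((List.finRange k).map fun i => (σ i, false)) := by
  constructor
  · exact fun H => OrientedWord.ExtendsLex.exists_eq_standardWord hk H hu
  · rintro ⟨σ, rfl⟩
    exact OrientedWord.extendsLex_standardWord σ
end

section
/- For every oriented word u of rank k ≥ 2 and every g ∈ F_k, τ_u(g) + τ_{u^rev}(g) = e(g), where u^rev is the reversal of u and e : F_k → ℤ is the total exponent homomorphism (sum of exponents of all letters of g). -/
open FreeGroup

/-! Reversing `u` reverses the relative order of any two distinct letters, so every two-letter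
pattern occurring in the definitions of `α` and `β` is counted by exactly one of `τ_u`,
`τ_{u^rev}`; the patterns for which the two compared letters coincide are `a a⁻¹` and `a⁻¹ a`,
which never occur in a reduced word. Hence `α_u + α_{u^rev} + β_u + β_{u^rev}` counts each consecutive pair `xy` of the reduced
word with the sign of `x`, which is `e(g)` minus the sign of the last letter, i.e. `e(g) - 2ω(g)`.
-/

namespace List

theorem idxOf_reverse {α : Type*} [BEq α] [LawfulBEq α] {u : List α} (hu : u.Nodup) {x : α}
    (hx : x ∈ u) : u.reverse.idxOf x = u.length - 1 - u.idxOf x := by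
  have hi : u.idxOf x < u.length := idxOf_lt_length_iff.2 hx
  have hj : u.length - 1 - u.idxOf x < u.reverse.length := by simp; omega
  have hget : u.reverse[u.length - 1 - u.idxOf x]'hj = x := by
    rw [getElem_reverse]
    simp only [show u.length - 1 - (u.length - 1 - u.idxOf x) = u.idxOf x by omega]
    exact getElem_idxOf hi
  conv_lhs => rw [← hget]
  exact (nodup_reverse.2 hu).idxOf_getElem _ _

theorem exists_eq_append_cons_cons_of_mem_zip_tail {α : Type*} :
    ∀ {L : List α} {x y : α}, (x, y) ∈ L.zip L.tail → ∃ l₁ l₂, L = l₁ ++ x :: y :: l₂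
  | [], _, _, h => by simp at h
  | [_], _, _, h => by simp at h
  | a :: b :: L, x, y, h => by
      rw [tail_cons, zip_cons_cons, mem_cons] at h
      rcases h with h | h
      · obtain ⟨rfl, rfl⟩ := Prod.mk.inj h
        exact ⟨[], L, rfl⟩
      · obtain ⟨l₁, l₂, hL⟩ := exists_eq_append_cons_cons_of_mem_zip_tail (L := b :: L) h
        exact ⟨a :: l₁, l₂, by rw [hL, cons_append]⟩

theorem sum_map_eq_sum_count_smul {ι M : Type*} [Fintype ι] [BEq ι] [LawfulBEq ι]
    [AddCommMonoid M] (l : List ι) (f : ι → M) : (l.map f).sum = ∑ i, l.count i • f i := by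
  induction l with
  | nil => simp
  | cons a l ih =>
    classical
    simp only [map_cons, sum_cons, count_cons, beq_iff_eq, add_smul, Finset.sum_add_distrib, ih,
      ite_smul, one_smul, zero_smul, Finset.sum_ite_eq, Finset.mem_univ, if_true]
    exact add_comm _ _

end List

section Oriented

variable {k : ℕ} {u : List (Letter k)}

theorem IsOriented.leftOf_reverse_iff (hu : IsOriented u) (x y : Letter k) :
    leftOf u.reverse x y ↔ leftOf u y x := by
  have hx := hu.2 x
  have hy := hu.2 y
  have hx' := List.idxOf_lt_length_iff.2 hx
  have hy' := List.idxOf_lt_length_iff.2 hy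
  unfold leftOf
  rw [List.idxOf_reverse hu.1 hx, List.idxOf_reverse hu.1 hy]
  omega

theorem IsOriented.ite_leftOf_add_ite_leftOf_reverse (hu : IsOriented u) {x y : Letter k}
    {c : ℝ} (hc : x = y → c = 0) :
    (if leftOf u x y then c else 0) + (if leftOf u.reverse x y then c else 0) = c := by
  simp only [hu.leftOf_reverse_iff]
  by_cases hxy : x = y
  · simp [hc hxy]
  · have hne : u.idxOf x ≠ u.idxOf y := fun h => hxy ((List.idxOf_inj (hu.2 x)).1 h)
    rcases hne.lt_or_gt with h | h <;> simp [leftOf, h, h.not_gt]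

theorem IsOriented.sum_ite_leftOf_add_sum_ite_leftOf_reverse (hu : IsOriented u)
    (x y : Fin k → Fin k → Letter k) (c : Fin k → Fin k → ℝ)
    (hc : ∀ a b, x a b = y a b → c a b = 0) :
    (∑ a, ∑ b, if leftOf u (x a b) (y a b) then c a b else 0)
      + (∑ a, ∑ b, if leftOf u.reverse (x a b) (y a b) then c a b else 0)
      = ∑ a, ∑ b, c a b := by
  simp only [← Finset.sum_add_distrib, hu.ite_leftOf_add_ite_leftOf_reverse (hc _ _)]

end Oriented

theorem cnt_toWord_invL {k : ℕ} (g : FreeGroup (Fin k)) (x : Letter k) :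
    cnt g.toWord x (invL x) = 0 := by
  refine List.count_eq_zero.2 fun hmem => ?_
  obtain ⟨l₁, l₂, hL⟩ := List.exists_eq_append_cons_cons_of_mem_zip_tail hmem
  have hred : IsReduced [x, invL x] :=
    isReduced_toWord.infix ⟨l₁, l₂, by rw [hL]; simp⟩
  simp [isReduced_cons_cons, invL] at hred

section Weights

variable {k : ℕ}

theorem IsOriented.alphaW_add_alphaW_reverse {u : List (Letter k)} (hu : IsOriented u)
    (g : FreeGroup (Fin k)) :
    alphaW u g.toWord + alphaW u.reverse g.toWord
      = (∑ a : Fin k, ∑ b : Fin k, (cnt g.toWord (a, true) (b, false) : ℝ))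
        - ∑ a : Fin k, ∑ b : Fin k, (cnt g.toWord (a, false) (b, true) : ℝ) := by
  have hpos : ∀ a b : Fin k, ((a, false) : Letter k) = (b, false) →
      (cnt g.toWord (a, true) (b, false) : ℝ) = 0 := by
    rintro a _ ⟨⟩
    exact_mod_cast cnt_toWord_invL g (a, true)
  have hneg : ∀ a b : Fin k, ((a, true) : Letter k) = (b, true) →
      (cnt g.toWord (b, false) (a, true) : ℝ) = 0 := by
    rintro a _ ⟨⟩
    exact_mod_cast cnt_toWord_invL g (a, false)
  unfold alphaW
  rw [sub_add_sub_comm, hu.sum_ite_leftOf_add_sum_ite_leftOf_reverse _ _ _ hpos,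
    hu.sum_ite_leftOf_add_sum_ite_leftOf_reverse _ _ _ hneg]
  exact congrArg _ Finset.sum_comm

theorem IsOriented.betaW_add_betaW_reverse {u : List (Letter k)} (hu : IsOriented u)
    (L : List (Letter k)) :
    betaW u L + betaW u.reverse L
      = (∑ a : Fin k, ∑ b : Fin k, (cnt L (a, true) (b, true) : ℝ))
        - ∑ a : Fin k, ∑ b : Fin k, (cnt L (a, false) (b, false) : ℝ) := by
  unfold betaW
  rw [sub_add_sub_comm,
    hu.sum_ite_leftOf_add_sum_ite_leftOf_reverse _ _ _ fun _ _ h => absurd h (by simp),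
    hu.sum_ite_leftOf_add_sum_ite_leftOf_reverse _ _ _ fun _ _ h => absurd h (by simp)]
  exact congrArg _ Finset.sum_comm

noncomputable def letterSign (x : Letter k) : ℝ := if x.2 then 1 else -1

theorem sum_map_letterSign_zip_tail_add_two_mul_omegaW :
    ∀ L : List (Letter k),
      ((L.zip L.tail).map fun p => letterSign p.1).sum + 2 * omegaW L = (L.map letterSign).sum
  | [] => by simp [omegaW]
  | [x] => by cases hx : x.2 <;> simp [omegaW, letterSign, hx]
  | x :: y :: L => by
      have ih := sum_map_letterSign_zip_tail_add_two_mul_omegaW (y :: L)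
      have hω : omegaW (x :: y :: L) = omegaW (y :: L) := by
        unfold omegaW; rw [List.getLast?_cons_cons]
      simp only [List.tail_cons, List.zip_cons_cons, List.map_cons, List.sum_cons] at ih ⊢
      linarith

theorem sum_map_letterSign_zip_tail (L : List (Letter k)) :
    ((L.zip L.tail).map fun p => letterSign p.1).sum
      = (∑ a : Fin k, ∑ b : Fin k, (cnt L (a, true) (b, true) : ℝ))
        + (∑ a : Fin k, ∑ b : Fin k, (cnt L (a, true) (b, false) : ℝ))
        - (∑ a : Fin k, ∑ b : Fin k, (cnt L (a, false) (b, true) : ℝ))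
        - ∑ a : Fin k, ∑ b : Fin k, (cnt L (a, false) (b, false) : ℝ) := by
  rw [List.sum_map_eq_sum_count_smul]
  simp only [Fintype.sum_prod_type, Fintype.sum_bool, letterSign, cnt, nsmul_eq_mul, if_true,
    Bool.false_eq_true, if_false, mul_one, mul_neg_one, Finset.sum_add_distrib,
    Finset.sum_neg_distrib]
  ring

end Weights

theorem stmt18_general {k : ℕ} (u : List (Letter k)) (hu : IsOriented u)
    (g : FreeGroup (Fin k)) :
    tau u g + tau u.reverse g
      = (g.toWord.map fun x => if x.2 then (1 : ℝ) else -1).sum := by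
  have hα := hu.alphaW_add_alphaW_reverse g
  have hβ := hu.betaW_add_betaW_reverse g.toWord
  have hω := sum_map_letterSign_zip_tail_add_two_mul_omegaW g.toWord
  rw [sum_map_letterSign_zip_tail] at hω
  change _ = (g.toWord.map letterSign).sum
  unfold tau
  linarith

theorem stmt18 {k : ℕ} (hk : 2 ≤ k) (u : List (Letter k)) (hu : IsOriented u)
    (g : FreeGroup (Fin k)) :
    tau u g + tau u.reverse g
      = (g.toWord.map fun x => if x.2 then (1 : ℝ) else -1).sum :=
  stmt18_general u hu g
end
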